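/- For integers L > s ≥ 1, the difference of Gaussian binomials G_{L,s} := [L choose s]_q - [L choose s-1]_q satisfies the recursion G_{L,s} = G_{L-1,s} + ∑_{k=1}^{s} q^{L-k} G_{L-k-1,s-k}, with boundary conditions G_{L,0} = 1 and G_{2s-1,s} = 0. -/

import Mathlib

/-!
Write `[n, m]` for the Gaussian binomial. The `q`-Pascal rule
`[L, s] = [L-1, s] + q^(L-s) [L-1, s-1]` and
`(1 - q^(L-1)) [L-2, s-1] = (1 - q^(L-s)) [L-1, s-1]` combine to
`[L, s] = [L-1, s] + [L-1, s-1] - (1 - q^(L-1)) [L-2, s-1]`, and telescoping this in `(L, s)` gives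
`[L, s] = [L-1, s] + ∑_{k=1}^{N} q^(L-k) [L-k-1, s-k]` for every `N ≥ s`, the terms with `k > s`
being zero. Taking `N = s` for both `[L, s]` and `[L, s-1]` and subtracting gives the recursion for
`G`. The boundary value `G_{2s-1,s} = 0` is the symmetry `[2s-1, s] = [2s-1, s-1]`.
-/

open PowerSeries Finset

noncomputable def qPoch (n : ℕ) : PowerSeries ℚ :=
  ∏ k ∈ Finset.range n, (1 - (X : PowerSeries ℚ) ^ (k + 1))

noncomputable def gauss (L : ℕ) (s : ℤ) : PowerSeries ℚ :=
  if 0 ≤ s ∧ s ≤ (L : ℤ) then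
    qPoch L * (qPoch s.toNat)⁻¹ * (qPoch (L - s.toNat))⁻¹
  else 0

/-- The difference of Gaussian binomials `G_{L,s} = [L, s] - [L, s-1]`. -/
noncomputable def G (L : ℕ) (s : ℤ) : PowerSeries ℚ := gauss L s - gauss L (s - 1)

theorem Finset.sum_Icc_one_succ {M : Type*} [AddCommMonoid M] (f : ℕ → M) (N : ℕ) :
    ∑ k ∈ Icc 1 (N + 1), f k = f 1 + ∑ k ∈ Icc 1 N, f (k + 1) := by
  rw [Icc_eq_cons_Ioc (by omega), sum_cons, ← Icc_add_one_left_eq_Ioc, ← map_add_right_Icc,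
    sum_map]
  rfl

lemma constantCoeff_qPoch (n : ℕ) : constantCoeff (qPoch n) = 1 := by
  simp [qPoch]

lemma qPoch_ne_zero (n : ℕ) : qPoch n ≠ 0 := fun h ↦ by
  simpa [h] using constantCoeff_qPoch n

lemma qPoch_mul_inv (n : ℕ) : qPoch n * (qPoch n)⁻¹ = 1 :=
  PowerSeries.mul_inv_cancel _ (by simp [constantCoeff_qPoch])

lemma qPoch_succ (n : ℕ) : qPoch (n + 1) = qPoch n * (1 - X ^ (n + 1)) :=
  prod_range_succ _ n

lemma gauss_of_neg (L : ℕ) {s : ℤ} (h : s < 0) : gauss L s = 0 := by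
  rw [gauss, if_neg]; omega

lemma gauss_natCast {L m : ℕ} (h : m ≤ L) :
    gauss L m = qPoch L * (qPoch m)⁻¹ * (qPoch (L - m))⁻¹ := by
  simp [gauss, h]

lemma gauss_zero_right (L : ℕ) : gauss L 0 = 1 := by
  rw [← Nat.cast_zero, gauss_natCast (Nat.zero_le L)]
  simp [qPoch]

/-- Identities between Gaussian binomials are proved by clearing these denominators. -/
lemma gauss_mul_qPoch_mul_qPoch (m t : ℕ) :
    gauss (m + t) m * (qPoch m * qPoch t) = qPoch (m + t) := by
  rw [gauss_natCast (by omega), Nat.add_sub_cancel_left]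
  calc qPoch (m + t) * (qPoch m)⁻¹ * (qPoch t)⁻¹ * (qPoch m * qPoch t)
      = qPoch (m + t) * (qPoch m * (qPoch m)⁻¹) * (qPoch t * (qPoch t)⁻¹) := by ring
    _ = qPoch (m + t) := by rw [qPoch_mul_inv, qPoch_mul_inv, mul_one, mul_one]

lemma gauss_symm (m t : ℕ) : gauss (m + t) m = gauss (m + t) t := by
  rw [gauss_natCast (by omega), gauss_natCast (by omega), Nat.add_sub_cancel_left,
    Nat.add_sub_cancel, mul_right_comm]

lemma gauss_succ_left {n : ℕ} {s : ℤ} (hs : s ≤ n) :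
    gauss (n + 1) s = gauss n s + X ^ (n + 1 - s).toNat * gauss n (s - 1) := by
  rcases lt_trichotomy s 0 with hs0 | rfl | hs0
  · simp [gauss_of_neg _ hs0, gauss_of_neg _ (show s - 1 < 0 by omega)]
  · simp [gauss_zero_right, gauss_of_neg]
  obtain ⟨m, t, rfl, rfl⟩ : ∃ m t : ℕ, s = m + 1 ∧ n = m + 1 + t :=
    ⟨s.toNat - 1, n - s.toNat, by omega, by omega⟩
  rw [show ((m + 1 + t : ℕ) + 1 - (m + 1 : ℤ)).toNat = t + 1 by omega, add_sub_cancel_right,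
    ← Nat.cast_add_one]
  refine mul_right_cancel₀ (mul_ne_zero (qPoch_ne_zero (m + 1)) (qPoch_ne_zero (t + 1))) ?_
  have h1 := gauss_mul_qPoch_mul_qPoch (m + 1) (t + 1)
  have h2 := gauss_mul_qPoch_mul_qPoch (m + 1) t
  have h3 := gauss_mul_qPoch_mul_qPoch m (t + 1)
  rw [← add_assoc] at h1
  rw [show m + (t + 1) = m + 1 + t by omega] at h3
  simp only [qPoch_succ m, qPoch_succ t, qPoch_succ (m + 1 + t)] at h1 h2 h3 ⊢
  linear_combination h1 - (1 - X ^ (t + 1)) * h2 - X ^ (t + 1) * (1 - X ^ (m + 1)) * h3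

lemma one_sub_pow_mul_gauss {n : ℕ} {s : ℤ} (hs : s ≤ n) :
    (1 - X ^ (n + 1)) * gauss n s = (1 - X ^ (n + 1 - s).toNat) * gauss (n + 1) s := by
  rcases lt_or_ge s 0 with hs0 | hs0
  · simp [gauss_of_neg _ hs0]
  obtain ⟨m, t, rfl, rfl⟩ : ∃ m t : ℕ, s = m ∧ n = m + t :=
    ⟨s.toNat, n - s.toNat, by omega, by omega⟩
  rw [show ((m + t : ℕ) + 1 - (m : ℤ)).toNat = t + 1 by omega]
  refine mul_right_cancel₀ (mul_ne_zero (qPoch_ne_zero m) (qPoch_ne_zero (t + 1))) ?_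
  have h1 := gauss_mul_qPoch_mul_qPoch m t
  have h2 := gauss_mul_qPoch_mul_qPoch m (t + 1)
  rw [← add_assoc] at h2
  simp only [qPoch_succ t, qPoch_succ (m + t)] at h1 h2 ⊢
  linear_combination (1 - X ^ (m + t + 1)) * (1 - X ^ (t + 1)) * h1 - (1 - X ^ (t + 1)) * h2

lemma gauss_add_two {n : ℕ} {s : ℤ} (hs : s ≤ n + 1) :
    gauss (n + 2) s = gauss (n + 1) s + gauss (n + 1) (s - 1) -
      (1 - X ^ (n + 1)) * gauss n (s - 1) := by
  have hexp : ((n + 1 : ℕ) + 1 - s).toNat = (n + 1 - (s - 1)).toNat := by omega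
  rw [gauss_succ_left hs, one_sub_pow_mul_gauss (by omega), ← hexp]
  ring

lemma gauss_eq_add_sum (N : ℕ) {L : ℕ} {s : ℤ} (hs : s ≤ N) (hL : N < L) :
    gauss L s = gauss (L - 1) s +
      ∑ k ∈ Icc 1 N, (X : PowerSeries ℚ) ^ (L - k) * gauss (L - k - 1) (s - k) := by
  induction N generalizing L s with
  | zero =>
    obtain ⟨n, rfl⟩ : ∃ n, L = n + 1 := ⟨L - 1, by omega⟩
    rcases hs.lt_or_eq with hs | rfl
    · simp [gauss_of_neg _ hs]
    · simp [gauss_zero_right]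
  | succ N ih =>
    obtain ⟨n, rfl⟩ : ∃ n, L = n + 2 := ⟨L - 2, by omega⟩
    have hprev := ih (L := n + 1) (s := s - 1) (by omega) (by omega)
    have hshift : ∑ k ∈ Icc 1 N, (X : PowerSeries ℚ) ^ (n + 2 - (k + 1)) *
          gauss (n + 2 - (k + 1) - 1) (s - (k + 1 : ℕ)) =
        ∑ k ∈ Icc 1 N, X ^ (n + 1 - k) * gauss (n + 1 - k - 1) (s - 1 - k) := by
      refine sum_congr rfl fun k _ ↦ ?_
      rw [show n + 2 - (k + 1) = n + 1 - k by omega, Nat.cast_add_one, sub_add_eq_sub_sub_swap]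
    rw [sum_Icc_one_succ, hshift, gauss_add_two (by omega)]
    simp only [show n + 2 - 1 = n + 1 by omega, Nat.add_sub_cancel, Nat.cast_one] at hprev ⊢
    linear_combination hprev

lemma G_zero_right (L : ℕ) : G L 0 = 1 := by
  simp [G, gauss_zero_right, gauss_of_neg]

lemma G_two_mul_sub_one {s : ℕ} (hs : 1 ≤ s) : G (2 * s - 1) s = 0 := by
  obtain ⟨m, rfl⟩ : ∃ m, s = m + 1 := ⟨s - 1, by omega⟩
  rw [G, show 2 * (m + 1) - 1 = m + 1 + m by omega, Nat.cast_add_one, add_sub_cancel_right,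
    ← Nat.cast_add_one, gauss_symm, sub_self]

lemma G_eq_add_sum {L s : ℕ} (hs : s < L) :
    G L s = G (L - 1) s +
      ∑ k ∈ Icc 1 s, (X : PowerSeries ℚ) ^ (L - k) * G (L - k - 1) ((s : ℤ) - k) := by
  have h := gauss_eq_add_sum s (s := s) le_rfl hs
  have h' := gauss_eq_add_sum s (s := (s : ℤ) - 1) (by omega) hs
  simp only [G, h, h', mul_sub, sum_sub_distrib, sub_right_comm _ (1 : ℤ)]
  ring

/-- For `L > s ≥ 1`, `G_{L,s} = [L, s] - [L, s-1]` satisfies the recursion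
`G_{L,s} = G_{L-1,s} + ∑_{k=1}^{s} q^{L-k} G_{L-k-1,s-k}`, with boundary
conditions `G_{L,0} = 1` and `G_{2s-1,s} = 0`. -/
theorem stmt5 (L s : ℕ) (h1 : 1 ≤ s) (h2 : s < L) :
    (G L s = G (L - 1) s +
        ∑ k ∈ Finset.Icc 1 s,
          (X : PowerSeries ℚ) ^ (L - k) * G (L - k - 1) ((s : ℤ) - k)) ∧
      G L 0 = 1 ∧ G (2 * s - 1) s = 0 :=
  ⟨G_eq_add_sum h2, G_zero_right L, G_two_mul_sub_one h1⟩
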